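/- For a finite simple graph G with at least 2 vertices and at least one edge, the graph G² on the vertices of G with u ~ v iff u ≠ v and |Γ(u) ∩ Γ(v)| ≥ 1 is connected if and only if G is connected and not bipartite. -/

import Mathlib

/-- The common-neighbor ("square") graph: distinct vertices are adjacent
iff they have a common neighbor in `G`. -/
def commonNeighborGraph {V : Type*} (G : SimpleGraph V) : SimpleGraph V where
  Adj u v := u ≠ v ∧ ∃ w, G.Adj u w ∧ G.Adj v w
  symm := by
    constructor
    intro u v h
    exact ⟨h.1.symm, h.2.choose, h.2.choose_spec.2, h.2.choose_spec.1⟩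
  loopless := by
    constructor
    intro u h
    exact h.1 rfl

private lemma cng_reach_of_even_walk {V : Type*} {G : SimpleGraph V} :
    ∀ (n : ℕ) {u v : V} (w : G.Walk u v), w.length = n → Even n →
      (commonNeighborGraph G).Reachable u v := by
  intro n
  induction n using Nat.strong_induction_on with
  | _ n ih =>
    intro u v w hlen he
    cases w with
    | nil => exact SimpleGraph.Reachable.refl _
    | cons h q =>
      cases q with
      | nil =>
        simp at hlen
        obtain ⟨k, hk⟩ := he
        omega
      | cons h' p =>
        rename_i a b
        have h1 : (commonNeighborGraph G).Reachable u b := by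
          by_cases hub : u = b
          · subst hub; exact SimpleGraph.Reachable.refl _
          · exact SimpleGraph.Adj.reachable ⟨hub, a, h, h'.symm⟩
        have hl : p.length + 1 + 1 = n := by simpa using hlen
        obtain ⟨k, hk⟩ := he
        have hlen2 : p.length = n - 2 := by omega
        have hn2 : n - 2 < n := by omega
        have he2 : Even (n - 2) := ⟨k - 1, by omega⟩
        exact h1.trans (ih (n - 2) hn2 p hlen2 he2)

private lemma g_reach_of_cng_reach {V : Type*} {G : SimpleGraph V} {u v : V}
    (h : (commonNeighborGraph G).Reachable u v) : G.Reachable u v := by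
  obtain ⟨w⟩ := h
  induction w with
  | nil => exact SimpleGraph.Reachable.refl _
  | cons h p ihp =>
    obtain ⟨-, a, h1, h2⟩ := h
    exact (h1.reachable.trans h2.reachable.symm).trans ihp

private lemma color_const_of_cng_reach {V : Type*} {G : SimpleGraph V} {u v : V}
    (C : G.Coloring (Fin 2)) (h : (commonNeighborGraph G).Reachable u v) : C u = C v := by
  obtain ⟨w⟩ := h
  induction w with
  | nil => rfl
  | cons h p ihp =>
    rename_i x y z
    obtain ⟨-, a, h1, h2⟩ := h
    have e1 : C x ≠ C a := C.valid h1
    have e2 : C y ≠ C a := C.valid h2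
    have key : ∀ a b c : Fin 2, a ≠ c → b ≠ c → a = b := by decide
    exact (key _ _ _ e1 e2).trans ihp

theorem commonNeighborGraph_connected_iff
    {V : Type*} [Fintype V]
    (G : SimpleGraph V)
    (hcard : 2 ≤ Fintype.card V)
    (hedge : ∃ u v : V, G.Adj u v) :
    (commonNeighborGraph G).Connected ↔ (G.Connected ∧ ¬ G.Colorable 2) := by
  obtain ⟨x0, y0, hxy0⟩ := hedge
  constructor
  · intro hH
    haveI : Nonempty V := hH.nonempty
    refine ⟨⟨fun u v => g_reach_of_cng_reach (hH u v)⟩, ?_⟩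
    rintro ⟨C⟩
    exact C.valid hxy0 (color_const_of_cng_reach C (hH x0 y0))
  · rintro ⟨hconn, hncol⟩
    haveI : Nonempty V := hconn.nonempty
    let W : ∀ v : V, G.Walk x0 v := fun v => (hconn x0 v).some
    have hfail : ∃ u v : V, G.Adj u v ∧ ((W u).length % 2 = (W v).length % 2) := by
      by_contra hno
      push_neg at hno
      apply hncol
      have C : G.Coloring (Fin 2) := SimpleGraph.Coloring.mk
        (fun v => ⟨(W v).length % 2, Nat.mod_lt _ (by omega)⟩)
        (by
          intro u v huv hcolor
          exact hno u v huv (congrArg Fin.val hcolor))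
      simpa using C.colorable
    obtain ⟨a, b, hab, hpar⟩ := hfail
    constructor
    intro u v
    set L : G.Walk x0 x0 :=
      ((W a).append (SimpleGraph.Walk.cons hab SimpleGraph.Walk.nil)).append (W b).reverse with hLdef
    have hLlen : L.length = (W a).length + 1 + (W b).length := by
      simp [hLdef, SimpleGraph.Walk.length_append, SimpleGraph.Walk.length_reverse]
    rcases Nat.even_or_odd ((W u).reverse.append (W v)).length with h | h
    · exact cng_reach_of_even_walk _ _ rfl h
    · apply cng_reach_of_even_walk _ ((W u).reverse.append (L.append (W v))) rfl
      rw [Nat.odd_iff] at h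
      rw [SimpleGraph.Walk.length_append, SimpleGraph.Walk.length_reverse] at h ⊢
      rw [SimpleGraph.Walk.length_append, hLlen, Nat.even_iff]
      omega
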